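/- arXiv:0912.0052 — 4 statements merged into one kernel-verified Lean document; each statement's English description precedes it below -/
import Mathlib

section
/- If n is a practical number, p is a prime with gcd(n, p) = 1, l is a positive integer, and σ(n) is odd, then n·p^l is a Zumkeller number if and only if p ≤ σ(n) and l is odd. -/
/-- A positive integer `n` is a Zumkeller number if the set of its positive divisors
can be partitioned into two disjoint parts whose sums are equal. -/
def Zumkeller (n : ℕ) : Prop :=
  0 < n ∧ ∃ A ⊆ n.divisors, ∑ d ∈ A, d = ∑ d ∈ n.divisors \ A, d

/-- A positive integer `n` is a half-Zumkeller number if the set of its positive proper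
divisors can be partitioned into two disjoint parts whose sums are equal. -/
def HalfZumkeller (n : ℕ) : Prop :=
  0 < n ∧ ∃ A ⊆ n.properDivisors, ∑ d ∈ A, d = ∑ d ∈ n.properDivisors \ A, d

/-- A positive integer `n` is a practical number if every positive integer less than `n`
can be written as a sum of distinct positive divisors of `n`. -/
def Practical (n : ℕ) : Prop :=
  0 < n ∧ ∀ m : ℕ, 0 < m → m < n → ∃ S ⊆ n.divisors, m = ∑ d ∈ S, d

/-- A positive integer `n` is a quasi-practical number if every positive integer
`m ≤ σ(n) - n` can be written as a sum of distinct positive divisors of `n`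
excluding `n` itself. -/
def QuasiPractical (n : ℕ) : Prop :=
  0 < n ∧ ∀ m : ℕ, 0 < m → m ≤ (∑ d ∈ n.divisors, d) - n →
    ∃ S ⊆ n.properDivisors, m = ∑ d ∈ S, d

/-!
Write `σ = σ(n)`, so that `σ(n p^l) = σ (1 + p + ⋯ + p^l)`, and note that the divisors of
`n p^l` which do not divide `n` are multiples of `p`.

If `n p^l` is Zumkeller then `σ(n p^l)` is even, which forces `p` and `l` to be odd. Reducing
the two halves of the partition mod `p` leaves complementary subsums `a + b = σ` of the
divisors of `n` with `a ≡ b (mod p)`; if `p > σ` this gives `a = b`, contradicting `σ` odd.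

Conversely, a practical number represents every `m ≤ σ` as a sum of distinct divisors. With
`σ = 2t + 1`, `p = 2u + 1`, `l = 2k + 1`, pick such subsums `S` of `t + u + 1` (possible as
`p ≤ σ`) and `T` of `t`. The divisors `d p^i` with `d ∈ S` for even `i` and `d ∈ T` for odd `i`
sum to half of `σ(n p^l)`, because `2 ((t + u + 1) + t p) = σ (1 + p)`. The case `p = 2` does
not occur: `2 ≤ σ` would make `2` a sum of distinct odd divisors of `n`.
-/

open Finset

theorem exists_subset_sum_eq_of_forall_le_one_add_sum_lt (D : Finset ℕ)
    (hD : ∀ d ∈ D, d ≤ 1 + ∑ e ∈ D with e < d, e) :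
    ∀ m ≤ ∑ d ∈ D, d, ∃ S ⊆ D, m = ∑ d ∈ S, d := by
  induction D using Finset.induction_on_max with
  | empty => intro m hm; exact ⟨∅, subset_refl _, by simpa using hm⟩
  | insert a D hlt ih =>
    have haD : a ∉ D := fun h => (hlt a h).false
    have hfilter : ∀ d ∈ insert a D, {e ∈ insert a D | e < d} = {e ∈ D | e < d} := by
      intro d hd
      rw [filter_insert, if_neg]
      rcases mem_insert.mp hd with rfl | hd
      · exact lt_irrefl d
      · exact (hlt d hd).not_gt
    have ha : a ≤ 1 + ∑ e ∈ D, e := by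
      have := hD a (mem_insert_self a D)
      rwa [hfilter a (mem_insert_self a D), filter_true_of_mem hlt] at this
    have hsub := ih fun d hd => hfilter d (mem_insert_of_mem hd) ▸ hD d (mem_insert_of_mem hd)
    intro m hm
    rw [sum_insert haD] at hm
    rcases le_or_gt m (∑ e ∈ D, e) with hle | hgt
    · obtain ⟨S, hS, rfl⟩ := hsub m hle
      exact ⟨S, hS.trans (subset_insert a D), rfl⟩
    · obtain ⟨S, hS, hSsum⟩ := hsub (m - a) (by omega)
      refine ⟨insert a S, insert_subset_insert a hS, ?_⟩
      rw [sum_insert fun h => haD (hS h), ← hSsum]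
      omega

theorem Practical.exists_subset_divisors_sum_eq {n : ℕ} (hn : Practical n) :
    ∀ m ≤ ∑ d ∈ n.divisors, d, ∃ S ⊆ n.divisors, m = ∑ d ∈ S, d := by
  refine exists_subset_sum_eq_of_forall_le_one_add_sum_lt _ fun d hd => ?_
  have hdn : d ≤ n := Nat.divisor_le hd
  have hd0 := Nat.pos_of_mem_divisors hd
  obtain rfl | hd1 : d = 1 ∨ 1 < d := by omega
  · omega
  obtain ⟨S, hS, hSsum⟩ := hn.2 (d - 1) (by omega) (by omega)
  have hSlt : S ⊆ {e ∈ n.divisors | e < d} := fun s hs =>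
    mem_filter.mpr ⟨hS hs, by have := single_le_sum (fun i _ => Nat.zero_le i) hs; omega⟩
  have := sum_le_sum_of_subset (f := fun d => d) hSlt
  omega

theorem two_dvd_of_two_le_sum_divisors {n : ℕ}
    (hn : ∀ m ≤ ∑ d ∈ n.divisors, d, ∃ S ⊆ n.divisors, m = ∑ d ∈ S, d)
    (h2 : 2 ≤ ∑ d ∈ n.divisors, d) : 2 ∣ n := by
  by_contra hodd
  obtain ⟨S, hS, hSsum⟩ := hn 2 h2
  have hS1 : S ⊆ {1} := by
    intro s hs
    have hs2 : s ≤ 2 := hSsum ▸ single_le_sum (f := fun d => d) (fun i _ => Nat.zero_le i) hs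
    have hs0 : s ≠ 0 := (Nat.pos_of_mem_divisors (hS hs)).ne'
    have hs2' : s ≠ 2 := fun h => hodd (h ▸ Nat.dvd_of_mem_divisors (hS hs))
    rw [mem_singleton]
    omega
  have := sum_le_sum_of_subset (f := fun d => d) hS1
  simp only [sum_singleton] at this
  omega

theorem zumkeller_iff_exists_two_mul_sum_eq {m : ℕ} :
    Zumkeller m ↔ 0 < m ∧ ∃ A ⊆ m.divisors, 2 * ∑ d ∈ A, d = ∑ d ∈ m.divisors, d := by
  refine and_congr_right fun _ => exists_congr fun A => and_congr_right fun hA => ?_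
  rw [← sum_sdiff (f := fun d => d) hA]
  omega

theorem even_geom_sum_succ_iff (p l : ℕ) :
    Even (∑ i ∈ range (l + 1), p ^ i) ↔ Odd p ∧ Odd l := by
  rw [even_sum_iff_even_card_odd]
  by_cases hp : Odd p
  · simp [hp, hp.pow, Nat.even_add_one]
  · have : {x ∈ range (l + 1) | Odd (p ^ x)} = {0} := by
      ext x
      simp only [mem_filter, mem_range, mem_singleton, ← Nat.not_even_iff_odd, Nat.even_pow,
        Nat.not_odd_iff_even.mp hp, true_and]
      omega
    simp [this, hp]

theorem eq_of_mul_pow_eq_mul_pow {p d d' i j : ℕ} (hp : p ≠ 0) (hd : ¬p ∣ d) (hd' : ¬p ∣ d')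
    (h : d * p ^ i = d' * p ^ j) : i = j ∧ d = d' := by
  wlog hij : i ≤ j generalizing i j d d'
  · obtain ⟨hji, hdd⟩ := this hd' hd h.symm (le_of_not_ge hij)
    exact ⟨hji.symm, hdd.symm⟩
  obtain ⟨k, rfl⟩ := Nat.exists_eq_add_of_le hij
  rw [add_comm i k, pow_add, ← mul_assoc] at h
  have hdk : d = d' * p ^ k := Nat.eq_of_mul_eq_mul_right (pow_pos (Nat.pos_of_ne_zero hp) i) h
  cases k with
  | zero => simpa using hdk
  | succ k => exact absurd (hdk ▸ (dvd_pow_self p k.succ_ne_zero).mul_left d') hd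

section MulPow

variable {n p : ℕ}

theorem sum_divisors_mul_prime_pow (hp : p.Prime) (hpn : ¬p ∣ n) (l : ℕ) :
    ∑ d ∈ (n * p ^ l).divisors, d = (∑ d ∈ n.divisors, d) * ∑ i ∈ range (l + 1), p ^ i := by
  have hcop : n.Coprime (p ^ l) := ((hp.coprime_iff_not_dvd.mpr hpn).pow_left l).symm
  rw [hcop.sum_divisors_mul, Nat.sum_divisors_prime_pow hp]

theorem sum_modEq_sum_inter_divisors (hp : p.Prime) (hn : n ≠ 0) {l : ℕ} {X : Finset ℕ}
    (hX : X ⊆ (n * p ^ l).divisors) :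
    ∑ d ∈ X, d ≡ ∑ d ∈ X ∩ n.divisors, d [MOD p] := by
  have hdvd : p ∣ ∑ d ∈ X \ n.divisors, d := by
    refine dvd_sum fun d hd => ?_
    obtain ⟨hdX, hdn⟩ := mem_sdiff.mp hd
    by_contra hpd
    have hd_dvd : d ∣ n * p ^ l := Nat.dvd_of_mem_divisors (hX hdX)
    have hcop : d.Coprime (p ^ l) := ((hp.coprime_iff_not_dvd.mpr hpd).pow_left l).symm
    exact hdn (Nat.mem_divisors.mpr ⟨hcop.dvd_of_dvd_mul_right hd_dvd, hn⟩)
  obtain ⟨c, hc⟩ := hdvd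
  rw [← sum_inter_add_sum_sdiff X n.divisors, hc]
  exact Nat.add_mul_mod_self_left _ p c

theorem le_sum_divisors_of_zumkeller_mul_pow (hp : p.Prime) (hn : n ≠ 0)
    (hσ : Odd (∑ d ∈ n.divisors, d)) {l : ℕ} (h : Zumkeller (n * p ^ l)) :
    p ≤ ∑ d ∈ n.divisors, d := by
  by_contra! hlt
  obtain ⟨-, A, hA, hsum⟩ := h
  have hsub : n.divisors ⊆ (n * p ^ l).divisors :=
    Nat.divisors_subset_of_dvd (mul_ne_zero hn (pow_ne_zero l hp.ne_zero)) (dvd_mul_right n _)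
  have hcompl : ((n * p ^ l).divisors \ A) ∩ n.divisors = n.divisors \ A := by
    ext d
    simp only [mem_inter, mem_sdiff]
    exact ⟨fun ⟨⟨_, hdA⟩, hdn⟩ => ⟨hdn, hdA⟩, fun ⟨hdn, hdA⟩ => ⟨⟨hsub hdn, hdA⟩, hdn⟩⟩
  have hA := sum_modEq_sum_inter_divisors hp hn hA
  have hB := sum_modEq_sum_inter_divisors hp hn (sdiff_subset (s := (n * p ^ l).divisors) (t := A))
  rw [hcompl, ← hsum] at hB
  rw [inter_comm] at hA
  have hsplit := sum_inter_add_sum_sdiff n.divisors A (fun d => d)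
  have heq := (hA.symm.trans hB).eq_of_lt_of_lt (by omega) (by omega)
  exact Nat.not_even_iff_odd.mpr hσ ⟨∑ d ∈ n.divisors \ A, d, by omega⟩

theorem exists_subset_divisors_mul_pow_sum_eq (hp : p ≠ 0) (hpn : ¬p ∣ n)
    (X : ℕ → Finset ℕ) (hX : ∀ i, X i ⊆ n.divisors) (l : ℕ) :
    ∃ A ⊆ (n * p ^ l).divisors, ∑ d ∈ A, d = ∑ i ∈ range (l + 1), (∑ d ∈ X i, d) * p ^ i := by
  have hpd : ∀ i, ∀ d ∈ X i, ¬p ∣ d := fun i d hd hpd =>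
    hpn (hpd.trans (Nat.dvd_of_mem_divisors (hX i hd)))
  refine ⟨((range (l + 1)).sigma X).image fun x => x.2 * p ^ x.1, ?_, ?_⟩
  · intro x hx
    obtain ⟨⟨i, d⟩, hid, rfl⟩ := mem_image.mp hx
    obtain ⟨hi, hd⟩ := mem_sigma.mp hid
    have hn : n ≠ 0 := fun h => hpn (h ▸ dvd_zero p)
    exact Nat.mem_divisors.mpr ⟨mul_dvd_mul (Nat.dvd_of_mem_divisors (hX i hd))
      (pow_dvd_pow p (Nat.lt_succ_iff.mp (mem_range.mp hi))), mul_ne_zero hn (pow_ne_zero l hp)⟩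
  · rw [sum_image, sum_sigma]
    · simp only [sum_mul]
    · rintro ⟨i, d⟩ hid ⟨j, e⟩ hje h
      obtain ⟨rfl, rfl⟩ := eq_of_mul_pow_eq_mul_pow hp (hpd i d (mem_sigma.mp hid).2)
        (hpd j e (mem_sigma.mp hje).2) h
      rfl

end MulPow

theorem two_mul_sum_ite_even_mul_pow {t u p : ℕ} (hp : p = 2 * u + 1) (k : ℕ) :
    2 * ∑ i ∈ range (2 * k), (if Even i then t + u + 1 else t) * p ^ i
      = (2 * t + 1) * ∑ i ∈ range (2 * k), p ^ i := by
  induction k with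
  | zero => simp
  | succ k ih =>
    rw [show 2 * (k + 1) = 2 * k + 1 + 1 by ring, sum_range_succ, sum_range_succ,
      sum_range_succ, sum_range_succ, if_pos (even_two_mul k),
      if_neg (Nat.not_even_iff_odd.mpr (odd_two_mul_add_one k))]
    subst hp
    linear_combination ih

theorem zumkeller_mul_pow_of_practical {n p l : ℕ} (hn : Practical n) (hp : p.Prime)
    (hpn : ¬p ∣ n) (hσ : Odd (∑ d ∈ n.divisors, d)) (hpσ : p ≤ ∑ d ∈ n.divisors, d)
    (hl : Odd l) : Zumkeller (n * p ^ l) := by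
  have hsubsum := hn.exists_subset_divisors_sum_eq
  obtain ⟨u, hu⟩ : Odd p := hp.eq_two_or_odd'.resolve_left fun h2 =>
    hpn (h2 ▸ two_dvd_of_two_le_sum_divisors hsubsum (h2 ▸ hpσ))
  obtain ⟨t, ht⟩ := hσ
  obtain ⟨k, rfl⟩ := hl
  obtain ⟨S, hS, hSsum⟩ := hsubsum (t + u + 1) (by omega)
  obtain ⟨T, hT, hTsum⟩ := hsubsum t (by omega)
  obtain ⟨A, hA, hAsum⟩ := exists_subset_divisors_mul_pow_sum_eq hp.ne_zero hpn
    (fun i => if Even i then S else T) (fun i => by split_ifs <;> assumption) (2 * k + 1)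
  refine zumkeller_iff_exists_two_mul_sum_eq.mpr ⟨Nat.mul_pos hn.1 (pow_pos hp.pos _), A, hA, ?_⟩
  rw [hAsum, sum_divisors_mul_prime_pow hp hpn, ht, show 2 * k + 1 + 1 = 2 * (k + 1) by ring,
    ← two_mul_sum_ite_even_mul_pow hu]
  congr 1
  refine sum_congr rfl fun i _ => ?_
  split_ifs <;> simp only [← hSsum, ← hTsum]

theorem stmt1_general (n p l : ℕ) (hn : Practical n) (hp : p.Prime) (hcop : Nat.gcd n p = 1)
    (hsigma : Odd (∑ d ∈ n.divisors, d)) :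
    Zumkeller (n * p ^ l) ↔ p ≤ (∑ d ∈ n.divisors, d) ∧ Odd l := by
  have hpn : ¬p ∣ n := (hp.coprime_iff_not_dvd).mp (Nat.coprime_comm.mp hcop)
  constructor
  · intro h
    refine ⟨le_sum_divisors_of_zumkeller_mul_pow hp hn.1.ne' hsigma h, ?_⟩
    obtain ⟨-, A, -, hA⟩ := zumkeller_iff_exists_two_mul_sum_eq.mp h
    rw [sum_divisors_mul_prime_pow hp hpn] at hA
    have hgeom : Even (∑ i ∈ range (l + 1), p ^ i) :=
      (Nat.even_mul.mp (hA ▸ even_two_mul _)).resolve_left (Nat.not_even_iff_odd.mpr hsigma)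
    exact ((even_geom_sum_succ_iff p l).mp hgeom).2
  · rintro ⟨hpσ, hl⟩
    exact zumkeller_mul_pow_of_practical hn hp hpn hsigma hpσ hl

theorem stmt1 (n p l : ℕ) (hn : Practical n) (hp : p.Prime) (hcop : Nat.gcd n p = 1)
    (hl : 0 < l) (hsigma : Odd (∑ d ∈ n.divisors, d)) :
    Zumkeller (n * p ^ l) ↔ p ≤ (∑ d ∈ n.divisors, d) ∧ Odd l :=
  stmt1_general n p l hn hp hcop hsigma
end

section
/- If n is a practical number, p is a prime with gcd(n, p) = 1, l is a positive integer, and σ(n) is even, then n·p^l is a half-Zumkeller number. -/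
open Finset

theorem Finset.exists_subset_sum_eq_of_le_one_add_sum_lt (D : Finset ℕ)
    (hD : ∀ d ∈ D, d ≤ 1 + ∑ e ∈ D with e < d, e) {m : ℕ} (hm : m ≤ ∑ d ∈ D, d) :
    ∃ S ⊆ D, ∑ d ∈ S, d = m := by
  -- Peel off the largest element `a`: either `m ≤ ∑ s`, or `a` is used and `m - a ≤ ∑ s`.
  induction D using Finset.induction_on_max generalizing m with
  | empty => exact ⟨∅, Subset.rfl, by simp_all⟩
  | insert a s hlt ih =>
    have has : a ∉ s := fun h => lt_irrefl a (hlt a h)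
    have hs : ∀ d ∈ s, d ≤ 1 + ∑ e ∈ s with e < d, e := fun d hd => by
      simpa [filter_insert, (hlt d hd).not_gt] using hD d (mem_insert_of_mem hd)
    have ha : a ≤ 1 + ∑ e ∈ s, e := by
      simpa [filter_insert, filter_true_of_mem hlt] using hD a (mem_insert_self a s)
    rw [sum_insert has] at hm
    by_cases hms : m ≤ ∑ e ∈ s, e
    · obtain ⟨S, hSs, hS⟩ := ih hs hms
      exact ⟨S, hSs.trans (subset_insert a s), hS⟩
    · obtain ⟨S, hSs, hS⟩ := ih hs (m := m - a) (by omega)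
      refine ⟨insert a S, insert_subset_insert a hSs, ?_⟩
      rw [sum_insert (fun h => has (hSs h))]
      omega

namespace Practical

variable {n : ℕ}

theorem le_one_add_sum_divisors_lt (hn : Practical n) {d : ℕ} (hdn : d ≤ n) :
    d ≤ 1 + ∑ e ∈ n.divisors with e < d, e := by
  rcases Nat.lt_or_ge d 2 with hd | hd
  · omega
  obtain ⟨S, hSn, hS⟩ := hn.2 (d - 1) (by omega) (by omega)
  have hSd : S ⊆ {e ∈ n.divisors | e < d} := fun e he =>
    mem_filter.mpr ⟨hSn he, by
      have := single_le_sum (f := fun e => e) (fun _ _ => Nat.zero_le _) he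
      omega⟩
  have : ∑ e ∈ S, e ≤ ∑ e ∈ n.divisors with e < d, e := sum_le_sum_of_subset hSd
  omega

theorem exists_subset_divisors_sum_eq_s4 (hn : Practical n) {m : ℕ}
    (hm : m ≤ ∑ d ∈ n.divisors, d) :
    ∃ S ⊆ n.divisors, ∑ d ∈ S, d = m :=
  exists_subset_sum_eq_of_le_one_add_sum_lt _
    (fun _ hd => hn.le_one_add_sum_divisors_lt (Nat.divisor_le hd)) hm

theorem exists_subset_properDivisors_sum_eq (hn : Practical n) {m : ℕ}
    (hm : m ≤ ∑ d ∈ n.properDivisors, d) :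
    ∃ S ⊆ n.properDivisors, ∑ d ∈ S, d = m := by
  refine exists_subset_sum_eq_of_le_one_add_sum_lt _ (fun d hd => ?_) hm
  have hdn := (Nat.mem_properDivisors.mp hd).2
  have hsub : {e ∈ n.divisors | e < d} ⊆ {e ∈ n.properDivisors | e < d} := by
    intro e he
    simp only [mem_filter, Nat.mem_divisors, Nat.mem_properDivisors] at he ⊢
    exact ⟨⟨he.1.1, by omega⟩, he.2⟩
  exact (hn.le_one_add_sum_divisors_lt hdn.le).trans (by gcongr)

theorem even (hn : Practical n) (h2n : 2 ≤ n) : Even n := by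
  -- For odd `n` the divisors below `3` sum to `1`, too little to represent `2`.
  by_contra hodd
  rw [Nat.not_even_iff_odd] at hodd
  have hsub : {e ∈ n.divisors | e < 3} ⊆ {1} := by
    intro e he
    simp only [mem_filter, Nat.mem_divisors] at he
    have : e ≠ 2 := by
      rintro rfl
      exact Nat.not_even_iff_odd.mpr hodd (even_iff_two_dvd.mpr he.1.1)
    have : e ≠ 0 := by rintro rfl; exact he.1.2 (Nat.eq_zero_of_zero_dvd he.1.1)
    simp only [mem_singleton]; omega
  have h3 := hn.le_one_add_sum_divisors_lt (d := 3) (by rcases hodd with ⟨k, rfl⟩; omega)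
  have : ∑ e ∈ n.divisors with e < 3, e ≤ 1 := by simpa using sum_le_sum_of_subset hsub
  omega

end Practical

theorem halfZumkeller_of_two_mul_sum_eq {N : ℕ} (hN : 0 < N) {A : Finset ℕ}
    (hA : A ⊆ N.properDivisors) (hsum : 2 * ∑ d ∈ A, d = ∑ d ∈ N.properDivisors, d) :
    HalfZumkeller N :=
  ⟨hN, A, hA, by have := sum_sdiff hA (f := fun d => d); omega⟩

theorem halfZumkeller_mul_of_sum_eq {n m : ℕ} (hn : 0 < n) (hm : 0 < m) (hnm : n.Coprime m)
    {B C : Finset ℕ} (hB : B ⊆ n.divisors) (hC : C ⊆ n.properDivisors)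
    (hBsum : 2 * ∑ d ∈ B, d = ∑ d ∈ n.divisors, d)
    (hCsum : 2 * ∑ d ∈ C, d + n = ∑ d ∈ n.divisors, d) :
    HalfZumkeller (n * m) := by
  set T := B ×ˢ m.properDivisors ∪ C ×ˢ {m}
  have hT : T ⊆ n.divisors ×ˢ m.divisors :=
    union_subset (product_subset_product hB Nat.properDivisors_subset_divisors)
      (product_subset_product (hC.trans Nat.properDivisors_subset_divisors)
        (singleton_subset_iff.mpr (Nat.mem_divisors_self m hm.ne')))
  have hinj : Set.InjOn (fun x : ℕ × ℕ => x.1 * x.2) T :=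
    hnm.mul_injOn_divisors.mono (coe_subset.mpr hT)
  have hdisj : Disjoint (B ×ˢ m.properDivisors) (C ×ˢ {m}) :=
    disjoint_product.mpr (Or.inr (disjoint_singleton_right.mpr Nat.self_notMem_properDivisors))
  refine halfZumkeller_of_two_mul_sum_eq (Nat.mul_pos hn hm) (A := T.image fun x => x.1 * x.2)
    ?_ ?_
  · refine image_subset_iff.mpr fun x hx => Nat.mem_properDivisors.mpr ?_
    rcases mem_union.mp hx with hx | hx <;> simp only [mem_product, mem_singleton] at hx
    · obtain ⟨hxB, hxm⟩ := hx
      obtain ⟨hx1, -⟩ := Nat.mem_divisors.mp (hB hxB)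
      obtain ⟨hx2, hx2m⟩ := Nat.mem_properDivisors.mp hxm
      exact ⟨mul_dvd_mul hx1 hx2, Nat.mul_lt_mul_of_le_of_lt (Nat.le_of_dvd hn hx1) hx2m hn⟩
    · obtain ⟨hxC, hxm⟩ := hx
      obtain ⟨hx1, hx1n⟩ := Nat.mem_properDivisors.mp (hC hxC)
      rw [hxm]
      exact ⟨mul_dvd_mul_right hx1 m, Nat.mul_lt_mul_of_pos_right hx1n hm⟩
  · have hσ := Nat.Coprime.sum_divisors_mul hnm
    rw [Nat.sum_divisors_eq_sum_properDivisors_add_self (n := m),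
      Nat.sum_divisors_eq_sum_properDivisors_add_self (n := n * m)] at hσ
    rw [sum_image hinj, sum_union hdisj, sum_product, sum_product, ← sum_mul_sum]
    simp only [sum_singleton, ← sum_mul]
    have : 2 * ((∑ d ∈ B, d) * ∑ d ∈ m.properDivisors, d + (∑ d ∈ C, d) * m) + n * m =
        (∑ d ∈ n.divisors, d) * (∑ d ∈ m.properDivisors, d + m) := by
      calc _ = (2 * ∑ d ∈ B, d) * ∑ d ∈ m.properDivisors, d + (2 * ∑ d ∈ C, d + n) * m := by
            ring
        _ = _ := by rw [hBsum, hCsum]; ring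
    linarith

theorem Practical.halfZumkeller_mul {n m : ℕ} (hn : Practical n)
    (hσ : Even (∑ d ∈ n.divisors, d)) (hm : 0 < m) (hnm : n.Coprime m) :
    HalfZumkeller (n * m) := by
  have hn1 : n ≠ 1 := by rintro rfl; simp at hσ
  obtain ⟨k, hk⟩ := hn.even (by have := hn.1; omega)
  obtain ⟨s, hs⟩ := hσ
  have hσn := Nat.sum_divisors_eq_sum_properDivisors_add_self (n := n)
  obtain ⟨B, hB, hBsum⟩ := hn.exists_subset_divisors_sum_eq_s4 (m := s) (by omega)
  obtain ⟨C, hC, hCsum⟩ := hn.exists_subset_properDivisors_sum_eq (m := s - k) (by omega)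
  exact halfZumkeller_mul_of_sum_eq hn.1 hm hnm hB hC (by omega) (by omega)

theorem stmt4_general (n p l : ℕ) (hn : Practical n) (hp : p.Prime) (hcop : Nat.gcd n p = 1)
    (hsigma : Even (∑ d ∈ n.divisors, d)) :
    HalfZumkeller (n * p ^ l) :=
  hn.halfZumkeller_mul hsigma (pow_pos hp.pos l) (Nat.Coprime.pow_right l hcop)

theorem stmt4 (n p l : ℕ) (hn : Practical n) (hp : p.Prime) (hcop : Nat.gcd n p = 1)
    (hl : 0 < l) (hsigma : Even (∑ d ∈ n.divisors, d)) :
    HalfZumkeller (n * p ^ l) :=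
  stmt4_general n p l hn hp hcop hsigma
end

section
/- Let n be a Zumkeller number with prime factorization n = p_1^{k_1}·p_2^{k_2}···p_m^{k_m} (the p_i distinct primes). Then for any positive integers l_1, ..., l_m, the number p_1^{k_1 + l_1(k_1+1)}·p_2^{k_2 + l_2(k_2+1)}···p_m^{k_m + l_m(k_m+1)} is a Zumkeller number. -/
/-!
Let `p ^ k` exactly divide `M` and put `K = k + 1`. Every `p`-adic valuation below `(j + 1) * K`
splits uniquely as `b * K + r` with `b ≤ j`, `r < K`, so `(b, d) ↦ p ^ (b * K) * d` is injective
on `{0, …, j} × divisors M`, and `σ (M * p ^ (j * K)) = (1 + p ^ K + ⋯ + p ^ (j * K)) * σ M`.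
Hence a half `A` of a Zumkeller partition of `M` lifts to the half
`{p ^ (b * K) * d | b ≤ j, d ∈ A}` for `M * p ^ (j * K)`. Since this multiplication leaves the
valuations at the other primes unchanged, it can be applied to the primes of `n` one at a time.
-/

open Finset

theorem zumkeller_iff {n : ℕ} :
    Zumkeller n ↔ 0 < n ∧ ∃ A ⊆ n.divisors, 2 * ∑ d ∈ A, d = ∑ d ∈ n.divisors, d := by
  refine and_congr_right fun _ => exists_congr fun A => and_congr_right fun hA => ?_
  rw [← sum_sdiff hA]
  omega

theorem geom_sum_range_mul {R : Type*} [CommSemiring R] (x : R) (J K : ℕ) :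
    ∑ i ∈ range (J * K), x ^ i = (∑ b ∈ range J, x ^ (b * K)) * ∑ a ∈ range K, x ^ a := by
  induction J with
  | zero => simp
  | succ J ih =>
    rw [Nat.succ_mul, sum_range_add, ih, sum_range_succ, add_mul]
    congr 1
    rw [mul_sum]
    simp only [pow_add]

namespace Nat

theorem injOn_pow_mul_mul_of_factorization_lt {p K : ℕ} (hp : p.Prime) :
    Set.InjOn (fun bd : ℕ × ℕ => p ^ (bd.1 * K) * bd.2)
      {bd | bd.2 ≠ 0 ∧ bd.2.factorization p < K} := by
  rintro ⟨b, d⟩ ⟨hd, hdK⟩ ⟨b', d'⟩ ⟨hd', hdK'⟩ heq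
  dsimp only at heq hd hdK hd' hdK'
  have hval : b * K + d.factorization p = b' * K + d'.factorization p := by
    simpa [factorization_mul (pow_ne_zero _ hp.ne_zero) hd,
      factorization_mul (pow_ne_zero _ hp.ne_zero) hd', hp.factorization_pow] using
      congrArg (·.factorization p) heq
  have hquot : ∀ {c r : ℕ}, r < K → (c * K + r) / K = c := fun hr => by
    rw [add_comm, add_mul_div_right _ _ (by omega), div_eq_of_lt hr, zero_add]
  have hb : b = b' := by rw [← hquot (c := b) hdK, hval, hquot hdK']
  subst hb
  rw [Nat.eq_of_mul_eq_mul_left (pow_pos hp.pos _) heq]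

theorem sum_divisors_mul_pow_mul_succ_factorization {M p : ℕ} (hp : p.Prime) (hM : M ≠ 0)
    (j : ℕ) :
    ∑ d ∈ (M * p ^ (j * (M.factorization p + 1))).divisors, d =
      (∑ b ∈ range (j + 1), p ^ (b * (M.factorization p + 1))) * ∑ d ∈ M.divisors, d := by
  have hcop : Coprime p (ordCompl[p] M) := coprime_ordCompl hp hM
  have hM_eq : p ^ M.factorization p * ordCompl[p] M = M := ordProj_mul_ordCompl_eq_self M p
  generalize ordCompl[p] M = m at hcop hM_eq
  generalize M.factorization p = k at hM_eq ⊢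
  subst hM_eq
  have hN_eq : p ^ k * m * p ^ (j * (k + 1)) = p ^ (k + j * (k + 1)) * m := by ring
  have hexp : k + j * (k + 1) + 1 = (j + 1) * (k + 1) := by ring
  rw [hN_eq, (hcop.pow_left _).sum_divisors_mul, (hcop.pow_left _).sum_divisors_mul,
    sum_divisors_prime_pow hp, sum_divisors_prime_pow hp, hexp, geom_sum_range_mul, mul_assoc]

theorem factorization_mul_prod_pow_of_notMem {n q : ℕ} {s : Finset ℕ} (e : ℕ → ℕ)
    (hn : n ≠ 0) (hs : ∀ p ∈ s, p.Prime) (hq : q ∉ s) :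
    (n * ∏ p ∈ s, p ^ e p).factorization q = n.factorization q := by
  have hpow : ∀ p ∈ s, p ^ e p ≠ 0 := fun p hp => pow_ne_zero _ (hs p hp).ne_zero
  rw [factorization_mul hn (prod_ne_zero_iff.mpr hpow), factorization_prod hpow]
  simp only [Finsupp.coe_add, Pi.add_apply, Finsupp.finsetSum_apply, add_eq_left]
  refine sum_eq_zero fun p hp => ?_
  rw [(hs p hp).factorization_pow, Finsupp.single_eq_of_ne]
  rintro rfl
  exact hq hp

end Nat

namespace Zumkeller

theorem mul_pow_mul_succ_factorization {M p : ℕ} (hM : Zumkeller M) (hp : p.Prime)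
    (j : ℕ) :
    Zumkeller (M * p ^ (j * (M.factorization p + 1))) := by
  obtain ⟨hM_pos, A, hA, hsum⟩ := zumkeller_iff.mp hM
  set K := M.factorization p + 1
  set f : ℕ × ℕ → ℕ := fun bd => p ^ (bd.1 * K) * bd.2
  have hf : Set.InjOn f (range (j + 1) ×ˢ A : Finset _) := by
    refine (Nat.injOn_pow_mul_mul_of_factorization_lt hp).mono fun bd hbd => ?_
    have hd : bd.2 ∣ M := Nat.dvd_of_mem_divisors (hA (mem_product.mp hbd).2)
    exact ⟨ne_zero_of_dvd_ne_zero hM_pos.ne' hd,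
      Nat.lt_succ_of_le ((Nat.factorization_le_iff_dvd (ne_zero_of_dvd_ne_zero hM_pos.ne' hd)
        hM_pos.ne').mpr hd p)⟩
  have hN : M * p ^ (j * K) ≠ 0 := mul_ne_zero hM_pos.ne' (pow_ne_zero _ hp.ne_zero)
  have hB : (range (j + 1) ×ˢ A).image f ⊆ (M * p ^ (j * K)).divisors := by
    simp only [subset_iff, mem_image, mem_product, mem_range, Prod.exists]
    rintro _ ⟨b, d, ⟨hb, hd⟩, rfl⟩
    refine Nat.mem_divisors.mpr ⟨?_, hN⟩
    rw [mul_comm M]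
    exact mul_dvd_mul (pow_dvd_pow p (Nat.mul_le_mul_right K (by omega)))
      (Nat.dvd_of_mem_divisors (hA hd))
  refine zumkeller_iff.mpr ⟨Nat.pos_of_ne_zero hN, _, hB, ?_⟩
  rw [Nat.sum_divisors_mul_pow_mul_succ_factorization hp hM_pos.ne', ← hsum,
    sum_image hf, sum_product, sum_mul, mul_sum]
  refine sum_congr rfl fun b _ => ?_
  rw [mul_left_comm, mul_sum A _ (p ^ _)]

theorem mul_prod_pow {n : ℕ} (hn : Zumkeller n) (l : ℕ → ℕ) {s : Finset ℕ}
    (hs : s ⊆ n.primeFactors) :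
    Zumkeller (n * ∏ p ∈ s, p ^ (l p * (n.factorization p + 1))) := by
  induction s using Finset.induction with
  | empty => simpa using hn
  | @insert q s hq ih =>
    have hs' : s ⊆ n.primeFactors := (subset_insert q s).trans hs
    have hq_prime : q.Prime := Nat.prime_of_mem_primeFactors (hs (mem_insert_self q s))
    have := (ih hs').mul_pow_mul_succ_factorization hq_prime (l q)
    rw [prod_insert hq, mul_comm (q ^ _), ← mul_assoc]
    rwa [Nat.factorization_mul_prod_pow_of_notMem _ hn.1.ne'
      (fun p hp => Nat.prime_of_mem_primeFactors (hs' hp)) hq] at this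

end Zumkeller

theorem stmt10_general (n : ℕ) (hz : Zumkeller n) (l : ℕ → ℕ) :
    Zumkeller (∏ p ∈ n.primeFactors,
      p ^ (n.factorization p + l p * (n.factorization p + 1))) := by
  have hn : ∏ p ∈ n.primeFactors, p ^ n.factorization p = n :=
    Nat.prod_factorization_pow_eq_self hz.1.ne'
  simp_rw [pow_add, prod_mul_distrib, hn]
  exact hz.mul_prod_pow l subset_rfl

theorem stmt10 (n : ℕ) (hz : Zumkeller n) (l : ℕ → ℕ)
    (hl : ∀ p ∈ n.primeFactors, 0 < l p) :
    Zumkeller (∏ p ∈ n.primeFactors,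
      p ^ (n.factorization p + l p * (n.factorization p + 1))) :=
  stmt10_general n hz l
end

section
/- If n is an odd half-Zumkeller number, then n is a perfect square. -/
/-!
For odd `n` all divisors are odd, so `σ(n) ≡ d(n) (mod 2)`. A half-Zumkeller partition
makes `σ(n) - n` even, hence `σ(n)` odd, so `d(n) = ∏ (eₚ + 1)` is odd and every exponent
`eₚ` is even.
-/

open Finset

namespace Nat

theorem isSquare_of_forall_even_factorization {n : ℕ} (hn : n ≠ 0)
    (h : ∀ p ∈ n.primeFactors, Even (n.factorization p)) : IsSquare n := by
  rw [← prod_factorization_pow_eq_self hn]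
  exact isSquare_prod _ fun p hp => (h p hp).isSquare_pow p

theorem even_factorization_of_odd_card_divisors {n p : ℕ} (h : Odd #n.divisors)
    (hp : p ∈ n.primeFactors) : Even (n.factorization p) := by
  rw [card_divisors (mem_primeFactors.1 hp).2.2] at h
  have hodd : Odd (n.factorization p + 1) := h.of_dvd_nat (dvd_prod_of_mem _ hp)
  simpa [Nat.odd_add_one] using hodd

theorem isSquare_of_odd_card_divisors {n : ℕ} (h : Odd #n.divisors) : IsSquare n := by
  have hn : n ≠ 0 := by
    rintro rfl
    simp at h
  exact isSquare_of_forall_even_factorization hn fun p hp =>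
    even_factorization_of_odd_card_divisors h hp

theorem odd_sum_divisors_iff_odd_card_divisors {n : ℕ} (hn : Odd n) :
    Odd (∑ d ∈ n.divisors, d) ↔ Odd #n.divisors := by
  rw [odd_sum_iff_odd_card_odd,
    filter_true_of_mem fun d hd => hn.of_dvd_nat (dvd_of_mem_divisors hd)]

end Nat

theorem HalfZumkeller.even_sum_properDivisors {n : ℕ} (h : HalfZumkeller n) :
    Even (∑ d ∈ n.properDivisors, d) := by
  obtain ⟨-, A, hA, hsum⟩ := h
  exact ⟨∑ d ∈ A, d, by rw [← sum_sdiff hA, ← hsum]⟩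

theorem stmt16 (n : ℕ) (hodd : Odd n) (hh : HalfZumkeller n) : IsSquare n := by
  have hσ : Odd (∑ d ∈ n.divisors, d) := by
    rw [Nat.sum_divisors_eq_sum_properDivisors_add_self]
    exact hh.even_sum_properDivisors.add_odd hodd
  exact Nat.isSquare_of_odd_card_divisors
    ((Nat.odd_sum_divisors_iff_odd_card_divisors hodd).mp hσ)
end
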